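/- arXiv:math/0404072 — 3 statements merged into one kernel-verified Lean document; each statement's English description precedes it below -/
import Mathlib

section
/- Let V be an n-dimensional complex vector space with a nondegenerate symmetric bilinear form (the case ε = 0), and let x be a skew-adjoint nilpotent endomorphism of V with Jordan type d. Let (p_1,…,p_k,p_k,…,p_1) be a sequence with π := ord(p_1,…,p_k,p_k,…,p_1) ∈ Pai(n,0) and S(π) = d, and suppose p_k is odd. Let F be an isotropic flag of V of type (p_1,…,p_k,p_k,…,p_1) with x F_i ⊆ F_{i−1} for all i. Then there exists an isotropic flag F' of V of type (p_1,…,p_k,p_k,…,p_1) such that x F'_i ⊆ F'_{i−1} for all i, F'_i = F_i for all i ≠ k, and F'_k ≠ F_k. (Lemma 4.2(ii).) -/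
open Module

/-- `d` is a partition of `n`, encoded as a weakly decreasing function on indices `≥ 1`
(with zero padding beyond the parts, in particular beyond index `n`) whose entries sum
to `n`. -/
def IsPartitionFun (n : ℕ) (d : ℕ → ℕ) : Prop :=
  (∀ i j, 1 ≤ i → i ≤ j → d j ≤ d i) ∧ (∀ j, n < j → d j = 0) ∧
    ∑ j ∈ Finset.Icc 1 n, d j = n

/-- The `i`-th entry of `ord(p_1,…,p_s)`, namely `#{j ∈ [1,s] : p_j ≥ i}`. -/
def ordEntry (s : ℕ) (p : ℕ → ℕ) (i : ℕ) : ℕ :=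
  ((Finset.Icc 1 s).filter fun j => i ≤ p j).card

/-- A nilpotent endomorphism `x` of an `n`-dimensional space has Jordan type `d` if
`#{j : d_j ≥ i} = dim ker(x^i) − dim ker(x^{i−1})` for every `i ≥ 1`. -/
def HasJordanType {V : Type*} [AddCommGroup V] [Module ℂ V]
    (n : ℕ) (x : Module.End ℂ V) (d : ℕ → ℕ) : Prop :=
  IsPartitionFun n d ∧ ∀ i, 1 ≤ i →
    finrank ℂ (LinearMap.ker (x ^ i)) =
      finrank ℂ (LinearMap.ker (x ^ (i - 1))) + ordEntry n d i

/-- A flag of type `(p_1,…,p_s)`: a chain `0 = F_0 ⊆ F_1 ⊆ … ⊆ F_s = V` with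
`dim(F_i/F_{i−1}) = p_i` for `1 ≤ i ≤ s`. -/
def IsFlagOfType {V : Type*} [AddCommGroup V] [Module ℂ V]
    (s : ℕ) (p : ℕ → ℕ) (F : ℕ → Submodule ℂ V) : Prop :=
  F 0 = ⊥ ∧ F s = ⊤ ∧ (∀ i, 1 ≤ i → i ≤ s → F (i - 1) ≤ F i) ∧
    ∀ i, 1 ≤ i → i ≤ s → finrank ℂ (F i) = finrank ℂ (F (i - 1)) + p i

/-- `π ∈ Pai(n,q)`: a partition of `n` with `π_i` odd for `1 ≤ i ≤ q` and `π_i` even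
for `i > q`. -/
def MemPai (n q : ℕ) (π : ℕ → ℕ) : Prop :=
  IsPartitionFun n π ∧ (∀ i, 1 ≤ i → i ≤ q → π i % 2 = 1) ∧ ∀ i, q < i → π i % 2 = 0

/-- `d ∈ P_ε(n)`: a partition of `n` in which every part `≡ ε (mod 2)` occurs with
even multiplicity. -/
def MemPeps (ε n : ℕ) (d : ℕ → ℕ) : Prop :=
  IsPartitionFun n d ∧ ∀ m, 1 ≤ m → m % 2 = ε % 2 →
    ((Finset.Icc 1 n).filter fun j => d j = m).card % 2 = 0

/-- `j ∈ I(π)` (with respect to `ε` and `n`): `j ≥ 1`, `j ≢ n (mod 2)`,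
`π_j ≡ ε (mod 2)` and `π_j ≥ π_{j+1} + 2`. -/
def memI (ε n : ℕ) (π : ℕ → ℕ) (j : ℕ) : Prop :=
  1 ≤ j ∧ j % 2 ≠ n % 2 ∧ π j % 2 = ε % 2 ∧ π (j + 1) + 2 ≤ π j

instance (ε n : ℕ) (π : ℕ → ℕ) (j : ℕ) : Decidable (memI ε n π j) := by
  unfold memI; infer_instance

/-- The Spaltenstein map: `S(π)_j = π_j − 1` if `j ∈ I(π)`, `π_j + 1` if
`j − 1 ∈ I(π)`, and `π_j` otherwise. -/
def spalt (ε n : ℕ) (π : ℕ → ℕ) (j : ℕ) : ℕ :=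
  if memI ε n π j then π j - 1
  else if memI ε n π (j - 1) then π j + 1
  else π j
/-- `x` is skew-adjoint with respect to the bilinear form `B`:
`⟨xv,w⟩ = −⟨v,xw⟩` for all `v, w`. -/
def IsSkewAdjointWrt {V : Type*} [AddCommGroup V] [Module ℂ V]
    (B : LinearMap.BilinForm ℂ V) (x : Module.End ℂ V) : Prop :=
  ∀ v w, B (x v) w = - B v (x w)

/-- A flag `F` of length `s` is isotropic with respect to `B` if `F_i^⊥ = F_{s−i}`
for all `i`. -/
def IsIsotropicFlag {V : Type*} [AddCommGroup V] [Module ℂ V]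
    (B : LinearMap.BilinForm ℂ V) (s : ℕ) (F : ℕ → Submodule ℂ V) : Prop :=
  ∀ i, i ≤ s → B.orthogonal (F i) = F (s - i)
lemma aux_alt_even {Q : Type*} [AddCommGroup Q] [Module ℂ Q] [FiniteDimensional ℂ Q]
    (Φ : LinearMap.BilinForm ℂ Q) (halt : ∀ u v, Φ u v = -Φ v u)
    (hnd : Φ.Nondegenerate) : finrank ℂ Q % 2 = 0 := by
  by_contra hodd
  have hodd' : Odd (finrank ℂ Q) := Nat.odd_iff.mpr (by omega)
  let b := Module.finBasis ℂ Q
  have hdet := (LinearMap.BilinForm.nondegenerate_iff_det_ne_zero b).mp hnd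
  set M := LinearMap.BilinForm.toMatrix b Φ with hM
  have hT : M.transpose = -M := by
    ext i j
    simp only [Matrix.transpose_apply, Matrix.neg_apply, hM, LinearMap.BilinForm.toMatrix_apply]
    exact halt (b j) (b i)
  have h1 : M.det = (-M).det := by rw [← hT, Matrix.det_transpose]
  rw [Matrix.det_neg] at h1
  simp only [Fintype.card_fin, hodd'.neg_one_pow, neg_one_mul] at h1
  have h2 : (2 : ℂ) * M.det = 0 := by linear_combination h1
  rcases mul_eq_zero.mp h2 with h | h
  · exact two_ne_zero h
  · exact hdet h

theorem stmt6' {V : Type*} [AddCommGroup V] [Module ℂ V] [FiniteDimensional ℂ V]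
    (n : ℕ) (hV : finrank ℂ V = n)
    (B : LinearMap.BilinForm ℂ V) (hB : B.Nondegenerate)
    (hsym : ∀ v w, B v w = B w v)
    (x : Module.End ℂ V) (hskew : IsSkewAdjointWrt B x)
    (k : ℕ) (hk : 1 ≤ k) (p : ℕ → ℕ)
    (hpk1 : p (k+1) = p k)
    (hppk : 1 ≤ p k)
    (hpkodd : p k % 2 = 1)
    (F : ℕ → Submodule ℂ V)
    (hAL : F (k-1) ≤ F k) (hLC : F k ≤ F (k+1))
    (hdimLk : finrank ℂ (F k) = finrank ℂ (F (k-1)) + p k)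
    (hdimC : finrank ℂ (F (k+1)) = finrank ℂ (F k) + p (k+1))
    (horthL : B.orthogonal (F k) = F k)
    (horthA : B.orthogonal (F (k-1)) = F (k+1))
    (horthC : B.orthogonal (F (k+1)) = F (k-1))
    (hxL : (F k).map (x : V →ₗ[ℂ] V) ≤ F (k-1))
    (hxC : (F (k+1)).map (x : V →ₗ[ℂ] V) ≤ F k) :
    ∃ L' : Submodule ℂ V,
      F (k-1) ≤ L' ∧ L' ≤ F (k+1) ∧
      finrank ℂ L' = finrank ℂ (F k) ∧
      B.orthogonal L' = L' ∧
      L'.map (x : V →ₗ[ℂ] V) ≤ F (k-1) ∧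
      (F (k+1)).map (x : V →ₗ[ℂ] V) ≤ L' ∧
      L' ≠ F k := by
  classical
  set A := F (k-1) with hAdef
  set L := F k with hLdef
  set C := F (k+1) with hCdef
  have hrefl : B.IsRefl := fun v w h => by rw [hsym w v]; exact h
  have hLiso : ∀ l ∈ L, ∀ l' ∈ L, B l l' = 0 := by
    intro l hl l' hl'
    have h : l' ∈ B.orthogonal L := horthL.symm ▸ hl'
    exact h l hl
  have hfinL : 2 * finrank ℂ L = n := by
    have h := LinearMap.BilinForm.finrank_orthogonal hB L
    rw [horthL, hV] at h
    have hle : finrank ℂ L ≤ n := hV ▸ Submodule.finrank_le L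
    omega
  rw [hpk1] at hdimC
  -- M
  set M := Submodule.map (x : V →ₗ[ℂ] V) C ⊔ A with hMdef
  have hMleL : M ≤ L := sup_le hxC hAL
  have hAM : A ≤ M := le_sup_right
  -- Kx
  set Kx := C ⊓ Submodule.comap (x : V →ₗ[ℂ] V) A with hKxdef
  have hLKx : L ≤ Kx :=
    le_inf hLC (fun l hl => Submodule.mem_comap.mpr (hxL (Submodule.mem_map_of_mem hl)))
  have hKxOrthM : Kx ≤ B.orthogonal M := by
    intro w hw
    obtain ⟨hwC, hwx⟩ := Submodule.mem_inf.mp hw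
    rw [LinearMap.BilinForm.mem_orthogonal_iff]
    intro m hm
    obtain ⟨m1, hm1, m2, hm2, rfl⟩ := Submodule.mem_sup.mp hm
    obtain ⟨cc, hcc, rfl⟩ := hm1
    show B (x cc + m2) w = 0
    have hwOrthA : w ∈ B.orthogonal A := horthA.symm ▸ hwC
    have h1 : B (x cc) w = 0 := by
      rw [hskew cc w]
      have hccOrthA : (cc : V) ∈ B.orthogonal A := horthA.symm ▸ hcc
      have h2 : B (x w) cc = 0 := hccOrthA (x w) (Submodule.mem_comap.mp hwx)
      rw [hsym] at h2
      rw [h2, neg_zero]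
    have h2 : B m2 w = 0 := hwOrthA m2 hm2
    rw [map_add, LinearMap.add_apply, h1, h2, add_zero]
  -- rank of Kx
  have hKxrank : finrank ℂ Kx + finrank ℂ M = finrank ℂ C + finrank ℂ A := by
    set f : C →ₗ[ℂ] V ⧸ A := A.mkQ ∘ₗ ((x : V →ₗ[ℂ] V) ∘ₗ C.subtype) with hf
    have hker : LinearMap.ker f = Submodule.comap C.subtype
        (Submodule.comap (x : V →ₗ[ℂ] V) A) := by
      ext c
      simp [hf, Submodule.Quotient.mk_eq_zero]
    have hkerrank : finrank ℂ (LinearMap.ker f) = finrank ℂ Kx := by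
      rw [hker, ← Submodule.finrank_map_subtype_eq C, Submodule.map_comap_subtype]
    have hrange : LinearMap.range f =
        Submodule.map A.mkQ (Submodule.map (x : V →ₗ[ℂ] V) C) := by
      rw [hf, LinearMap.range_comp, LinearMap.range_comp, Submodule.range_subtype]
    have hmapA : Submodule.map A.mkQ A = ⊥ := by
      apply le_bot_iff.mp
      rintro q ⟨a, ha, rfl⟩
      simpa [Submodule.Quotient.mk_eq_zero] using ha
    have hrangeM : Submodule.map A.mkQ (Submodule.map (x : V →ₗ[ℂ] V) C)
        = Submodule.map A.mkQ M := by
      rw [hMdef, Submodule.map_sup, hmapA, sup_bot_eq]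
    have hMsplit : finrank ℂ M = finrank ℂ (Submodule.map A.mkQ M) + finrank ℂ A := by
      set g : M →ₗ[ℂ] V ⧸ A := A.mkQ ∘ₗ M.subtype with hg
      have h1 : LinearMap.range g = Submodule.map A.mkQ M := by
        rw [hg, LinearMap.range_comp, Submodule.range_subtype]
      have h2 : LinearMap.ker g = Submodule.comap M.subtype A := by
        ext m
        simp [hg, Submodule.Quotient.mk_eq_zero]
      have h3 : finrank ℂ (LinearMap.ker g) = finrank ℂ A := by
        rw [h2, ← Submodule.finrank_map_subtype_eq M, Submodule.map_comap_subtype,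
          inf_of_le_right hAM]
      have h4 := LinearMap.finrank_range_add_finrank_ker g
      rw [h1, h3] at h4
      omega
    have h5 := LinearMap.finrank_range_add_finrank_ker f
    rw [hrange, hrangeM, hkerrank] at h5
    omega
  -- M ≠ L
  have hMneL : M ≠ L := by
    intro hML
    have hfM : finrank ℂ M = finrank ℂ L := by rw [hML]
    have hfKx : finrank ℂ Kx ≤ finrank ℂ L := by omega
    have hKxL : L = Kx := Submodule.eq_of_le_of_finrank_le hLKx hfKx
    set Lc := Submodule.comap C.subtype L with hLc
    have hfLc : finrank ℂ Lc = finrank ℂ L := by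
      rw [hLc, ← Submodule.finrank_map_subtype_eq C, Submodule.map_comap_subtype,
        inf_of_le_right hLC]
    set ψ : C →ₗ[ℂ] C →ₗ[ℂ] ℂ :=
      B.compl₁₂ ((x : V →ₗ[ℂ] V) ∘ₗ C.subtype) C.subtype with hψ
    have hψ_apply : ∀ c c' : C, ψ c c' = B (x (c : V)) (c' : V) := fun c c' => rfl
    have hψskew : ∀ c c' : C, ψ c c' = - ψ c' c := by
      intro c c'
      rw [hψ_apply, hψ_apply, hskew, hsym]
    have hleft : ∀ l ∈ Lc, ψ l = 0 := by
      intro l hl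
      ext c'
      have hxl : (x (l : V)) ∈ A := hxL (Submodule.mem_map_of_mem hl)
      have hc'o : (c' : V) ∈ B.orthogonal A := horthA.symm ▸ c'.2
      have h0 : B (x (l : V)) (c' : V) = 0 := hc'o _ hxl
      simpa [hψ_apply] using h0
    have hright : ∀ (c : C), ∀ l ∈ Lc, ψ c l = 0 := by
      intro c l hl
      rw [hψskew c l, hleft l hl]
      simp
    have hcond1 : Lc ≤ LinearMap.ker ψ := fun l hl => LinearMap.mem_ker.mpr (hleft l hl)
    set Ψ : (C ⧸ Lc) →ₗ[ℂ] C →ₗ[ℂ] ℂ := Lc.liftQ ψ hcond1 with hΨ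
    have hΨ_mk : ∀ c : C, Ψ (Submodule.Quotient.mk c) = ψ c := fun c => rfl
    have hcond2 : Lc ≤ LinearMap.ker Ψ.flip := by
      intro l hl
      rw [LinearMap.mem_ker]
      apply LinearMap.ext
      intro q
      obtain ⟨c, rfl⟩ := Submodule.Quotient.mk_surjective Lc q
      show Ψ (Submodule.Quotient.mk c) l = 0
      rw [hΨ_mk, hright c l hl]
    set Φ : (C ⧸ Lc) →ₗ[ℂ] (C ⧸ Lc) →ₗ[ℂ] ℂ := Lc.liftQ Ψ.flip hcond2 with hΦ
    have hΦ_mk : ∀ c c' : C, Φ (Submodule.Quotient.mk c) (Submodule.Quotient.mk c')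
        = ψ c' c := fun c c' => rfl
    have hΦalt : ∀ u v, Φ u v = - Φ v u := by
      intro u v
      obtain ⟨c, rfl⟩ := Submodule.Quotient.mk_surjective Lc u
      obtain ⟨c', rfl⟩ := Submodule.Quotient.mk_surjective Lc v
      rw [hΦ_mk, hΦ_mk, hψskew]
    have hΦnd : LinearMap.BilinForm.Nondegenerate Φ := by
      suffices hl : ∀ m, (∀ n, Φ m n = 0) → m = 0 from
        ⟨hl, fun m hm => hl m (fun n => by rw [hΦalt, hm n, neg_zero])⟩
      intro q hq
      obtain ⟨c, rfl⟩ := Submodule.Quotient.mk_surjective Lc q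
      rw [Submodule.Quotient.mk_eq_zero]
      have hxc : x (c : V) ∈ B.orthogonal C := by
        rw [LinearMap.BilinForm.mem_orthogonal_iff]
        intro c' hc'
        have h6 := hq (Submodule.Quotient.mk (⟨c', hc'⟩ : C))
        rw [hΦ_mk, hψ_apply] at h6
        -- h6 : B (x c') c = 0 ; goal : B c' (x c) = 0
        have h7 := hskew (c' : V) (c : V)  -- B (x c') c = - B c' (x c)
        show B c' (x (c : V)) = 0
        rw [h7] at h6
        exact neg_eq_zero.mp h6
      have hxcA : x (c : V) ∈ A := by rw [horthC] at hxc; exact hxc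
      have hcKx : (c : V) ∈ Kx := Submodule.mem_inf.mpr ⟨c.2, Submodule.mem_comap.mpr hxcA⟩
      rw [← hKxL] at hcKx
      exact Submodule.mem_comap.mpr hcKx
    have hQdim : finrank ℂ (C ⧸ Lc) = p k := by
      have h8 := Submodule.finrank_quotient_add_finrank Lc
      omega
    have h9 := aux_alt_even Φ hΦalt hΦnd
    rw [hQdim] at h9
    omega
  -- strictness
  have hMltL : M < L := lt_of_le_of_ne hMleL hMneL
  have hfMlt : finrank ℂ M < finrank ℂ L := Submodule.finrank_lt_finrank_of_lt hMltL
  have hfOrthM : finrank ℂ (B.orthogonal M) = n - finrank ℂ M := by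
    rw [LinearMap.BilinForm.finrank_orthogonal hB, hV]
  have horthLM : B.orthogonal L ≤ B.orthogonal M := LinearMap.BilinForm.orthogonal_le hMleL
  have hLltOrthM : L < B.orthogonal M := by
    apply Submodule.lt_of_le_of_finrank_lt_finrank (horthL ▸ horthLM)
    rw [hfOrthM]; omega
  obtain ⟨w, hwOrthM, hwL⟩ := SetLike.exists_of_lt hLltOrthM
  -- H
  set H := L ⊓ LinearMap.ker (B w) with hHdef
  have hMH : M ≤ H := by
    refine le_inf hMleL (fun m hm => ?_)
    rw [LinearMap.mem_ker]
    have h := hwOrthM m hm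
    rw [hsym]; exact h
  have hHL : H ≤ L := inf_le_left
  have hfH : finrank ℂ H = finrank ℂ L - 1 := by
    set g : L →ₗ[ℂ] ℂ := (B w) ∘ₗ L.subtype with hg
    have hgker : Submodule.map L.subtype (LinearMap.ker g) = H := by
      rw [hg, LinearMap.ker_comp, Submodule.map_comap_subtype]
    have hgne : g ≠ 0 := by
      have hwnotorth : w ∉ B.orthogonal L := horthL.symm ▸ hwL
      intro h0
      apply hwnotorth
      rw [LinearMap.BilinForm.mem_orthogonal_iff]
      intro l hl
      have h1 : g ⟨l, hl⟩ = 0 := by rw [h0]; rfl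
      show B l w = 0
      rw [hsym]; exact h1
    have hrange1 : finrank ℂ (LinearMap.range g) = 1 := by
      have hub : finrank ℂ (LinearMap.range g) ≤ 1 := by
        have := Submodule.finrank_le (LinearMap.range g)
        simpa using this
      have hne : LinearMap.range g ≠ ⊥ := fun hb => hgne (LinearMap.range_eq_bot.mp hb)
      have hne0 : finrank ℂ (LinearMap.range g) ≠ 0 :=
        fun h0 => hne (Submodule.finrank_eq_zero.mp h0)
      omega
    have h6 := LinearMap.finrank_range_add_finrank_ker g
    have h7 : finrank ℂ H = finrank ℂ (LinearMap.ker g) := by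
      rw [← hgker, Submodule.finrank_map_subtype_eq]
    omega
  have hfOrthH : finrank ℂ (B.orthogonal H) = n - (finrank ℂ L - 1) := by
    rw [LinearMap.BilinForm.finrank_orthogonal hB, hV, hfH]
  -- T
  set T := Kx ⊓ B.orthogonal H with hTdef
  have hLT : L ≤ T := le_inf hLKx (horthL ▸ LinearMap.BilinForm.orthogonal_le hHL)
  have hsupOrthM : Kx ⊔ B.orthogonal H ≤ B.orthogonal M :=
    sup_le hKxOrthM (LinearMap.BilinForm.orthogonal_le hMH)
  have hfT : finrank ℂ L < finrank ℂ T := by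
    have h8 := Submodule.finrank_sup_add_finrank_inf_eq Kx (B.orthogonal H)
    rw [← hTdef] at h8
    have h9 : finrank ℂ ↥(Kx ⊔ B.orthogonal H) ≤ n - finrank ℂ M := by
      rw [← hfOrthM]; exact Submodule.finrank_mono hsupOrthM
    have h10 : finrank ℂ M ≤ n := hV ▸ Submodule.finrank_le M
    omega
  obtain ⟨t, htT, htL⟩ := SetLike.exists_of_lt
    (Submodule.lt_of_le_of_finrank_lt_finrank hLT hfT)
  have htnotorth : t ∉ B.orthogonal L := horthL.symm ▸ htL
  have hex : ∃ l ∈ L, B l t ≠ 0 := by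
    by_contra hno
    push_neg at hno
    exact htnotorth (fun l hl => hno l hl)
  obtain ⟨l, hlL, hlt⟩ := hex
  set c : ℂ := -(B t t) / (2 * B l t) with hc
  set v : V := t + c • l with hv
  have hvT : v ∈ T := T.add_mem htT (T.smul_mem c (hLT hlL))
  have hvL : v ∉ L := by
    intro hvl
    apply htL
    have ht' : t = v - c • l := by rw [hv]; abel
    rw [ht']
    exact L.sub_mem hvl (L.smul_mem c hlL)
  have hvv : B v v = 0 := by
    have hBll : B l l = 0 := hLiso l hlL l hlL
    have hBtl : B t l = B l t := hsym t l
    rw [hv]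
    simp only [map_add, map_smul, LinearMap.add_apply, LinearMap.smul_apply, smul_eq_mul]
    rw [hBll, hBtl, hc]
    field_simp
    ring
  have hvKx : v ∈ Kx := (inf_le_left : T ≤ Kx) hvT
  have hvOrthH : v ∈ B.orthogonal H := (inf_le_right : T ≤ B.orthogonal H) hvT
  have hvC : v ∈ C := (Submodule.mem_inf.mp hvKx).1
  have hxvA : x v ∈ A := Submodule.mem_comap.mp (Submodule.mem_inf.mp hvKx).2
  -- L'
  set L' := H ⊔ (ℂ ∙ v) with hL'def
  have hvne : v ≠ 0 := fun h => hvL (h ▸ L.zero_mem)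
  have hvnotH : v ∉ H := fun h => hvL (hHL h)
  have hfL' : finrank ℂ L' = finrank ℂ L := by
    have h10 := Submodule.finrank_sup_add_finrank_inf_eq H (ℂ ∙ v)
    have h11 : H ⊓ (ℂ ∙ v) = ⊥ := by
      rw [eq_bot_iff]
      rintro y hy
      obtain ⟨hyH, hyv⟩ := Submodule.mem_inf.mp hy
      rw [Submodule.mem_span_singleton] at hyv
      obtain ⟨a, rfl⟩ := hyv
      rcases eq_or_ne a 0 with rfl | ha
      · simp
      · exfalso
        apply hvnotH
        have : v = a⁻¹ • (a • v) := by rw [smul_smul, inv_mul_cancel₀ ha, one_smul]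
        rw [this]
        exact H.smul_mem _ hyH
    have h12 : finrank ℂ (ℂ ∙ v) = 1 := finrank_span_singleton hvne
    rw [h11] at h10
    simp only [finrank_bot, add_zero] at h10
    rw [h12, ← hL'def] at h10
    omega
  have hL'C : L' ≤ C :=
    sup_le (le_trans hHL hLC) ((Submodule.span_singleton_le_iff_mem _ _).mpr hvC)
  have hAL' : A ≤ L' := le_trans (le_trans hAM hMH) le_sup_left
  have hL'iso : ∀ u ∈ L', ∀ u' ∈ L', B u u' = 0 := by
    intro u hu u' hu'
    obtain ⟨h1, hh1, s1, hs1, rfl⟩ := Submodule.mem_sup.mp hu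
    obtain ⟨h2, hh2, s2, hs2, rfl⟩ := Submodule.mem_sup.mp hu'
    rw [Submodule.mem_span_singleton] at hs1 hs2
    obtain ⟨a1, rfl⟩ := hs1
    obtain ⟨a2, rfl⟩ := hs2
    have e1 : B h1 h2 = 0 := hLiso _ (hHL hh1) _ (hHL hh2)
    have e2 : B h1 v = 0 := hvOrthH h1 hh1
    have e3 : B v h2 = 0 := by rw [hsym]; exact hvOrthH h2 hh2
    simp only [map_add, map_smul, LinearMap.add_apply, LinearMap.smul_apply, smul_eq_mul]
    rw [e1, e2, e3, hvv]
    ring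
  have hL'orth : B.orthogonal L' = L' := by
    have hle : L' ≤ B.orthogonal L' := by
      intro u hu
      rw [LinearMap.BilinForm.mem_orthogonal_iff]
      exact fun u' hu' => hL'iso u' hu' u hu
    have hfr : finrank ℂ (B.orthogonal L') ≤ finrank ℂ L' := by
      rw [LinearMap.BilinForm.finrank_orthogonal hB, hV, hfL']
      omega
    exact (Submodule.eq_of_le_of_finrank_le hle hfr).symm
  have hxL' : L'.map (x : V →ₗ[ℂ] V) ≤ A := by
    rw [hL'def, Submodule.map_sup]
    apply sup_le
    · exact le_trans (Submodule.map_mono hHL) hxL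
    · rw [Submodule.map_le_iff_le_comap]
      exact (Submodule.span_singleton_le_iff_mem _ _).mpr (Submodule.mem_comap.mpr hxvA)
  have hxCL' : C.map (x : V →ₗ[ℂ] V) ≤ L' := le_trans (le_trans le_sup_left hMH) le_sup_left
  have hvL' : v ∈ L' :=
    (le_sup_right : (ℂ ∙ v) ≤ L') (Submodule.mem_span_singleton_self v)
  have hL'neL : L' ≠ L := fun h => hvL (h ▸ hvL')
  exact ⟨L', hAL', hL'C, hfL', hL'orth, hxL', hxCL', hL'neL⟩

/-- Lemma 4.2(ii). In the orthogonal case `ε = 0` with `q = 0`: if `F` is an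
isotropic flag of type `(p_1,…,p_k,p_k,…,p_1)` (of length `2k`) with
`x F_i ⊆ F_{i−1}` for all `i`, where `π = ord(p_1,…,p_k,p_k,…,p_1) ∈ Pai(n,0)`,
`S(π) = d` and `p_k` is odd, then there is an isotropic flag `F'` of the same type
with `x F'_i ⊆ F'_{i−1}` for all `i`, `F'_i = F_i` for `i ≠ k`, and `F'_k ≠ F_k`. -/
theorem stmt6 {V : Type*} [AddCommGroup V] [Module ℂ V] [FiniteDimensional ℂ V]
    (n : ℕ) (hV : finrank ℂ V = n)
    (B : LinearMap.BilinForm ℂ V) (hB : B.Nondegenerate)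
    (hsym : ∀ v w, B v w = B w v)
    (x : Module.End ℂ V) (hskew : IsSkewAdjointWrt B x) (hx : IsNilpotent x)
    (d : ℕ → ℕ) (hd : HasJordanType n x d)
    (k : ℕ) (hk : 1 ≤ k) (p : ℕ → ℕ)
    (hpal : ∀ i, 1 ≤ i → i ≤ 2 * k → p (2 * k + 1 - i) = p i)
    (hppos : ∀ i, 1 ≤ i → i ≤ k → 1 ≤ p i)
    (hπ : MemPai n 0 (ordEntry (2 * k) p))
    (hS : ∀ i, 1 ≤ i → spalt 0 n (ordEntry (2 * k) p) i = d i)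
    (hpkodd : p k % 2 = 1)
    (F : ℕ → Submodule ℂ V) (hF : IsFlagOfType (2 * k) p F)
    (hFiso : IsIsotropicFlag B (2 * k) F)
    (hxF : ∀ i, 1 ≤ i → i ≤ 2 * k → (F i).map (x : V →ₗ[ℂ] V) ≤ F (i - 1)) :
    ∃ F' : ℕ → Submodule ℂ V, IsFlagOfType (2 * k) p F' ∧
      IsIsotropicFlag B (2 * k) F' ∧
      (∀ i, 1 ≤ i → i ≤ 2 * k → (F' i).map (x : V →ₗ[ℂ] V) ≤ F' (i - 1)) ∧
      (∀ i, i ≤ 2 * k → i ≠ k → F' i = F i) ∧ F' k ≠ F k := by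
  
  classical
  obtain ⟨hF0, hFtop, hFmono, hFdim⟩ := hF
  have hAL : F (k-1) ≤ F k := hFmono k hk (by omega)
  have hLC : F k ≤ F (k+1) := by
    have h := hFmono (k+1) (by omega) (by omega)
    rwa [Nat.add_sub_cancel] at h
  have hdimLk : finrank ℂ (F k) = finrank ℂ (F (k-1)) + p k := hFdim k hk (by omega)
  have hdimC : finrank ℂ (F (k+1)) = finrank ℂ (F k) + p (k+1) := by
    have h := hFdim (k+1) (by omega) (by omega)
    rwa [Nat.add_sub_cancel] at h
  have horthL : B.orthogonal (F k) = F k := by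
    have h := hFiso k (by omega)
    rwa [show 2*k-k = k by omega] at h
  have horthA : B.orthogonal (F (k-1)) = F (k+1) := by
    have h := hFiso (k-1) (by omega)
    rwa [show 2*k-(k-1) = k+1 by omega] at h
  have horthC : B.orthogonal (F (k+1)) = F (k-1) := by
    have h := hFiso (k+1) (by omega)
    rwa [show 2*k-(k+1) = k-1 by omega] at h
  have hxLA : (F k).map (x : V →ₗ[ℂ] V) ≤ F (k-1) := hxF k hk (by omega)
  have hxCk : (F (k+1)).map (x : V →ₗ[ℂ] V) ≤ F k := by
    have h := hxF (k+1) (by omega) (by omega)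
    rwa [Nat.add_sub_cancel] at h
  have hpk1 : p (k+1) = p k := by
    have h := hpal k hk (by omega)
    rwa [show 2*k+1-k = k+1 by omega] at h
  obtain ⟨L', hAL', hL'C, hfL', hL'orth, hxL', hxCL', hL'neL⟩ :=
    stmt6' n hV B hB hsym x hskew k hk p hpk1 (hppos k hk le_rfl) hpkodd F hAL hLC
      hdimLk hdimC horthL horthA horthC hxLA hxCk
  refine ⟨fun i => if i = k then L' else F i, ⟨?_, ?_, ?_, ?_⟩, ?_, ?_, ?_, ?_⟩
  · simp only [if_neg (show ¬ (0 = k) by omega)]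
    exact hF0
  · simp only [if_neg (show ¬ (2*k = k) by omega)]
    exact hFtop
  · intro i h1 h2
    rcases eq_or_ne i k with rfl | hik
    · simp only [if_neg (show ¬ (i-1 = i) by omega), if_pos rfl]
      exact hAL'
    · rcases eq_or_ne i (k+1) with rfl | hik1
      · simp only [show k+1-1 = k by omega, if_pos rfl, if_neg hik]
        exact hL'C
      · simp only [if_neg (show ¬ (i-1 = k) by omega), if_neg hik]
        exact hFmono i h1 h2
  · intro i h1 h2
    beta_reduce
    rcases eq_or_ne i k with rfl | hik
    · rw [show (if i = i then L' else F i) = L' from if_pos rfl,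
        show (if i - 1 = i then L' else F (i-1)) = F (i-1) from if_neg (by omega), hfL']
      exact hdimLk
    · rcases eq_or_ne i (k+1) with rfl | hik1
      · rw [show (if k + 1 = k then L' else F (k+1)) = F (k+1) from if_neg hik,
          show (if k + 1 - 1 = k then L' else F (k+1-1)) = L' from if_pos (by omega), hfL']
        exact hdimC
      · rw [show (if i = k then L' else F i) = F i from if_neg hik,
          show (if i - 1 = k then L' else F (i-1)) = F (i-1) from if_neg (by omega)]
        exact hFdim i h1 h2
  · intro i hi
    rcases eq_or_ne i k with rfl | hik
    · simp only [if_pos rfl, show 2*i-i = i by omega]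
      exact hL'orth
    · simp only [if_neg hik, if_neg (show ¬ (2*k - i = k) by omega)]
      exact hFiso i hi
  · intro i h1 h2
    rcases eq_or_ne i k with rfl | hik
    · simp only [if_pos rfl, if_neg (show ¬ (i-1 = i) by omega)]
      exact hxL'
    · rcases eq_or_ne i (k+1) with rfl | hik1
      · simp only [if_neg hik, show k+1-1 = k by omega, if_pos rfl]
        exact hxCL'
      · simp only [if_neg hik, if_neg (show ¬ (i-1 = k) by omega)]
        exact hxF i h1 h2
  · intro i _ hik
    exact if_neg hik
  · simp only [if_pos rfl]
    exact hL'neL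
end

section
/- Let ε ∈ {0,1}, n ≥ 1, q ≥ 0, let π ∈ Pai(n,q), and let p ≥ 1 satisfy π_p ≥ π_{p+1} + 2. Define the partition ρ of n − 2p by ρ_j = π_j − 2 for j ≤ p and ρ_j = π_j for j > p (so ρ ∈ Pai(n−2p,q)); write d := S(π) and μ := S(ρ) (the Spaltenstein map for ρ being taken with respect to n − 2p, which has the same parity as n). Suppose case (A) holds: p ∉ I(ρ) and I(π) = {p} ∪ I(ρ). Then p ≢ n (mod 2), π_p ≡ ε (mod 2), π_p = π_{p+1} + 2, and μ_j = d_j − 2 for j < p, μ_p = d_p − 1, μ_{p+1} = d_{p+1} − 1, μ_j = d_j for j > p+1, where moreover d_p = d_{p+1}. (Case (A) in the proof of Theorem 2.7.) -/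
open Module

/-- Case (A) in the proof of Theorem 2.7. Here `d := S(π)` (Spaltenstein map for `n`)
and `μ := S(ρ)` (Spaltenstein map for `n − 2p`), where `ρ_j = π_j − 2` for `j ≤ p` and
`ρ_j = π_j` for `j > p`. The equations `μ_j = d_j − c` are stated as `μ_j + c = d_j`. -/
theorem stmt8 (ε n q p : ℕ) (hε : ε ≤ 1) (hn : 1 ≤ n) (hp : 1 ≤ p)
    (π : ℕ → ℕ) (hπ : MemPai n q π) (hgap : π (p + 1) + 2 ≤ π p)
    (ρ : ℕ → ℕ) (hρ : ∀ j, 1 ≤ j → ρ j = if j ≤ p then π j - 2 else π j)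
    (d μ : ℕ → ℕ)
    (hd : ∀ j, 1 ≤ j → d j = spalt ε n π j)
    (hμ : ∀ j, 1 ≤ j → μ j = spalt ε (n - 2 * p) ρ j)
    (hA : ¬ memI ε (n - 2 * p) ρ p ∧
      ∀ j, memI ε n π j ↔ (j = p ∨ memI ε (n - 2 * p) ρ j)) :
    p % 2 ≠ n % 2 ∧ π p % 2 = ε % 2 ∧ π p = π (p + 1) + 2 ∧
    (∀ j, 1 ≤ j → j < p → μ j + 2 = d j) ∧
    μ p + 1 = d p ∧ μ (p + 1) + 1 = d (p + 1) ∧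
    (∀ j, p + 1 < j → μ j = d j) ∧ d p = d (p + 1) := by
  obtain ⟨⟨hmono, hzero, hsum⟩, hodd, heven⟩ := hπ
  obtain ⟨hnotρ, hI⟩ := hA
  have hpI : memI ε n π p := (hI p).mpr (Or.inl rfl)
  obtain ⟨-, hp1, hpe, -⟩ := hpI
  have hπp2 : 2 ≤ π p := by omega
  have hpn : p ≤ n := by
    by_contra h
    have := hzero p (by omega)
    omega
  have h2pn : 2 * p ≤ n := by
    have hge : ∀ j ∈ Finset.Icc 1 p, 2 ≤ π j := by
      intro j hj
      simp only [Finset.mem_Icc] at hj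
      have := hmono j p hj.1 hj.2
      omega
    have h1 : 2 * p ≤ ∑ j ∈ Finset.Icc 1 p, π j := by
      calc 2 * p = ∑ _j ∈ Finset.Icc 1 p, 2 := by simp [mul_comm]
      _ ≤ _ := Finset.sum_le_sum hge
    have h2 : ∑ j ∈ Finset.Icc 1 p, π j ≤ ∑ j ∈ Finset.Icc 1 n, π j :=
      Finset.sum_le_sum_of_subset (Finset.Icc_subset_Icc le_rfl hpn)
    omega
  have hρp : ρ p = π p - 2 := by rw [hρ p hp, if_pos le_rfl]
  have hρp1 : ρ (p + 1) = π (p + 1) := by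
    rw [hρ (p + 1) (by omega), if_neg (by omega)]
  have hub : π p ≤ π (p + 1) + 3 := by
    by_contra h
    exact hnotρ ⟨hp, by omega, by rw [hρp]; omega, by rw [hρp, hρp1]; omega⟩
  have heq : π p = π (p + 1) + 2 := by
    by_contra h
    have h3 : π p = π (p + 1) + 3 := by omega
    have hqp : q = p := by
      by_contra hq
      rcases Nat.lt_or_ge q p with h' | h'
      · have e1 := heven p (by omega)
        have e2 := heven (p + 1) (by omega)
        omega
      · have o1 := hodd p hp (by omega)
        have o2 := hodd (p + 1) (by omega) (by omega)
        omega
    have hqn : q ≤ n := by omega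
    have hsum2 : n % 2 = q % 2 := by
      conv_lhs => rw [← hsum]
      rw [Finset.sum_nat_mod]
      have h1 : ∑ j ∈ Finset.Icc 1 n, π j % 2
          = ∑ j ∈ Finset.Icc 1 n, (if j ≤ q then 1 else 0) := by
        apply Finset.sum_congr rfl
        intro j hj
        simp only [Finset.mem_Icc] at hj
        by_cases hjq : j ≤ q
        · rw [if_pos hjq, hodd j hj.1 hjq]
        · rw [if_neg hjq, heven j (by omega)]
      have h2 : (Finset.Icc 1 n).filter (fun j => j ≤ q) = Finset.Icc 1 q := by
        ext j; simp only [Finset.mem_filter, Finset.mem_Icc]; omega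
      rw [h1, ← Finset.sum_filter, h2]
      simp
    omega
  have hIρ : ∀ j, j ≠ p → (memI ε (n - 2 * p) ρ j ↔ memI ε n π j) := by
    intro j hj
    constructor
    · intro h; exact (hI j).mpr (Or.inr h)
    · intro h
      rcases (hI j).mp h with h' | h'
      · exact absurd h' hj
      · exact h'
  have hpm1 : ¬ memI ε n π (p - 1) := by
    rintro ⟨h1, h2, -, -⟩; omega
  have hpp1 : ¬ memI ε n π (p + 1) := by
    rintro ⟨h1, h2, -, -⟩; omega
  refine ⟨hp1, hpe, heq, ?_, ?_, ?_, ?_, ?_⟩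
  · -- j < p
    intro j hj1 hjp
    have hρj : ρ j = π j - 2 := by rw [hρ j hj1, if_pos (by omega)]
    have hρj1 : ρ (j + 1) = π (j + 1) - 2 := by
      rw [hρ (j + 1) (by omega), if_pos (by omega)]
    have hπj : 2 ≤ π j := le_trans hπp2 (hmono j p hj1 (by omega))
    rw [hd j hj1, hμ j hj1]
    unfold spalt
    by_cases hmem : memI ε n π j
    · have hmemρ : memI ε (n - 2 * p) ρ j := (hIρ j (by omega)).mpr hmem
      have hπj3 : 3 ≤ π j := by
        have := hmem.2.2.2
        have := le_trans hπp2 (hmono (j + 1) p (by omega) (by omega))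
        omega
      rw [if_pos hmem, if_pos hmemρ, hρj]
      omega
    · have hmemρ : ¬ memI ε (n - 2 * p) ρ j := fun h => hmem ((hIρ j (by omega)).mp h)
      rw [if_neg hmem, if_neg hmemρ]
      by_cases hmem' : memI ε n π (j - 1)
      · have : memI ε (n - 2 * p) ρ (j - 1) := (hIρ (j - 1) (by omega)).mpr hmem'
        rw [if_pos hmem', if_pos this, hρj]
        omega
      · have : ¬ memI ε (n - 2 * p) ρ (j - 1) :=
          fun h => hmem' ((hIρ (j - 1) (by omega)).mp h)
        rw [if_neg hmem', if_neg this, hρj]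
        omega
  · -- j = p
    have hpIπ : memI ε n π p := (hI p).mpr (Or.inl rfl)
    have hρpm1 : ¬ memI ε (n - 2 * p) ρ (p - 1) :=
      fun h => hpm1 ((hIρ (p - 1) (by omega)).mp h)
    rw [hd p hp, hμ p hp]
    unfold spalt
    rw [if_pos hpIπ, if_neg hnotρ, if_neg hρpm1, hρp]
    omega
  · -- j = p + 1
    have hpIπ : memI ε n π p := (hI p).mpr (Or.inl rfl)
    have hρpp1 : ¬ memI ε (n - 2 * p) ρ (p + 1) :=
      fun h => hpp1 ((hIρ (p + 1) (by omega)).mp h)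
    rw [hd (p + 1) (by omega), hμ (p + 1) (by omega)]
    unfold spalt
    rw [if_neg hpp1, if_neg hρpp1]
    simp only [Nat.add_sub_cancel]
    rw [if_pos hpIπ, if_neg hnotρ, hρp1]
  · -- j > p + 1
    intro j hj
    have hρj : ρ j = π j := by rw [hρ j (by omega), if_neg (by omega)]
    have hρj1 : ρ (j + 1) = π (j + 1) := by
      rw [hρ (j + 1) (by omega), if_neg (by omega)]
    rw [hd j (by omega), hμ j (by omega)]
    unfold spalt
    by_cases hmem : memI ε n π j
    · rw [if_pos hmem, if_pos ((hIρ j (by omega)).mpr hmem), hρj]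
    · rw [if_neg hmem, if_neg (fun h => hmem ((hIρ j (by omega)).mp h))]
      by_cases hmem' : memI ε n π (j - 1)
      · rw [if_pos hmem', if_pos ((hIρ (j - 1) (by omega)).mpr hmem'), hρj]
      · rw [if_neg hmem',
          if_neg (fun h => hmem' ((hIρ (j - 1) (by omega)).mp h)), hρj]
  · -- d p = d (p + 1)
    have hpIπ : memI ε n π p := (hI p).mpr (Or.inl rfl)
    rw [hd p hp, hd (p + 1) (by omega)]
    unfold spalt
    rw [if_pos hpIπ, if_neg hpp1]
    simp only [Nat.add_sub_cancel]
    rw [if_pos hpIπ]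
    omega
end

section
/- Let ε ∈ {0,1}, n ≥ 1, q ≥ 0, let π ∈ Pai(n,q), and let p ≥ 1 satisfy π_p ≥ π_{p+1} + 2. Define the partition ρ of n − 2p by ρ_j = π_j − 2 for j ≤ p and ρ_j = π_j for j > p (so ρ ∈ Pai(n−2p,q)); write d := S(π) and μ := S(ρ) (the Spaltenstein map for ρ being taken with respect to n − 2p, which has the same parity as n). Suppose case (A) does not hold, i.e. it is not the case that p ∉ I(ρ) and I(π) = {p} ∪ I(ρ). Then I(π) = I(ρ), and μ_j = d_j − 2 for j ≤ p and μ_j = d_j for j > p. (Case (B) in the proof of Theorem 2.7.) -/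
open Module

/-- Case (B) in the proof of Theorem 2.7: if case (A) does not hold then
`I(π) = I(ρ)`, `μ_j = d_j − 2` for `j ≤ p` (stated as `μ_j + 2 = d_j`) and
`μ_j = d_j` for `j > p`. Here `d := S(π)` (Spaltenstein map for `n`) and `μ := S(ρ)`
(Spaltenstein map for `n − 2p`), where `ρ_j = π_j − 2` for `j ≤ p` and `ρ_j = π_j`
for `j > p`. -/
theorem stmt9 (ε n q p : ℕ) (hε : ε ≤ 1) (hn : 1 ≤ n) (hp : 1 ≤ p)
    (π : ℕ → ℕ) (hπ : MemPai n q π) (hgap : π (p + 1) + 2 ≤ π p)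
    (ρ : ℕ → ℕ) (hρ : ∀ j, 1 ≤ j → ρ j = if j ≤ p then π j - 2 else π j)
    (d μ : ℕ → ℕ)
    (hd : ∀ j, 1 ≤ j → d j = spalt ε n π j)
    (hμ : ∀ j, 1 ≤ j → μ j = spalt ε (n - 2 * p) ρ j)
    (hnotA : ¬ (¬ memI ε (n - 2 * p) ρ p ∧
      ∀ j, memI ε n π j ↔ (j = p ∨ memI ε (n - 2 * p) ρ j))) :
    (∀ j, memI ε n π j ↔ memI ε (n - 2 * p) ρ j) ∧
    (∀ j, 1 ≤ j → j ≤ p → μ j + 2 = d j) ∧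
    ∀ j, p < j → μ j = d j := by
  obtain ⟨⟨hmono, hzero, hsum⟩, hodd, heven⟩ := hπ
  have hgap2 : 2 ≤ π p := by omega
  have hπ2 : ∀ j, 1 ≤ j → j ≤ p → 2 ≤ π j := fun j hj1 hjp =>
    le_trans hgap2 (hmono j p hj1 hjp)
  have hpn : p ≤ n := by
    by_contra h
    have := hzero p (by omega)
    omega
  have hsum1 : 2 * p ≤ n := by
    have h1 : ∑ j ∈ Finset.Icc 1 p, 2 ≤ ∑ j ∈ Finset.Icc 1 p, π j :=
      Finset.sum_le_sum (fun j hj => by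
        rw [Finset.mem_Icc] at hj; exact hπ2 j hj.1 hj.2)
    have h2 : ∑ j ∈ Finset.Icc 1 p, π j ≤ ∑ j ∈ Finset.Icc 1 n, π j :=
      Finset.sum_le_sum_of_subset (Finset.Icc_subset_Icc_right hpn)
    simp [Nat.card_Icc, Finset.sum_const, smul_eq_mul] at h1
    omega
  have hpar : (n - 2 * p) % 2 = n % 2 := by omega
  have heqne : ∀ j, j ≠ p → (memI ε n π j ↔ memI ε (n - 2 * p) ρ j) := by
    intro j hjp
    rcases Nat.eq_zero_or_pos j with h0 | h1
    · subst h0; unfold memI; omega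
    · rcases lt_or_gt_of_ne hjp with hlt | hgt
      · have e1 : ρ j = π j - 2 := by rw [hρ j h1, if_pos (le_of_lt hlt)]
        have e2 : ρ (j + 1) = π (j + 1) - 2 := by
          rw [hρ (j + 1) (by omega), if_pos (by omega)]
        have t1 := hπ2 j h1 (le_of_lt hlt)
        have t2 := hπ2 (j + 1) (by omega) (by omega)
        unfold memI; omega
      · have e1 : ρ j = π j := by rw [hρ j h1, if_neg (by omega)]
        have e2 : ρ (j + 1) = π (j + 1) := by
          rw [hρ (j + 1) (by omega), if_neg (by omega)]
        unfold memI; omega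
  have ep1 : ρ p = π p - 2 := by rw [hρ p hp, if_pos le_rfl]
  have ep2 : ρ (p + 1) = π (p + 1) := by
    rw [hρ (p + 1) (by omega), if_neg (by omega)]
  have himp : memI ε (n - 2 * p) ρ p → memI ε n π p := by
    unfold memI; omega
  have heq : ∀ j, memI ε n π j ↔ memI ε (n - 2 * p) ρ j := by
    intro j
    by_cases hjp : j = p
    · rw [hjp]
      by_cases hc : memI ε (n - 2 * p) ρ p
      · exact ⟨fun _ => hc, fun _ => himp hc⟩
      · refine ⟨fun hπp => ?_, fun h => (hc h).elim⟩
        exfalso; apply hnotA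
        refine ⟨hc, fun j => ?_⟩
        by_cases hjp : j = p
        · rw [hjp]
          exact ⟨fun _ => Or.inl rfl, fun _ => hπp⟩
        · rw [heqne j hjp]
          exact ⟨fun h => Or.inr h, fun h => h.elim (fun h => absurd h hjp) id⟩
    · exact heqne j hjp
  refine ⟨heq, ?_, ?_⟩
  · intro j hj1 hjp
    rw [hμ j hj1, hd j hj1]
    unfold spalt
    have eρ : ρ j = π j - 2 := by rw [hρ j hj1, if_pos hjp]
    have t1 := hπ2 j hj1 hjp
    by_cases h1 : memI ε n π j
    · have h1' := (heq j).1 h1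
      rw [if_pos h1', if_pos h1]
      have hg : ρ (j + 1) + 2 ≤ ρ j := h1'.2.2.2
      omega
    · rw [if_neg (fun h => h1 ((heq j).2 h)), if_neg h1]
      by_cases h2 : memI ε n π (j - 1)
      · rw [if_pos ((heq (j - 1)).1 h2), if_pos h2]; omega
      · rw [if_neg (fun h => h2 ((heq (j - 1)).2 h)), if_neg h2]; omega
  · intro j hjp
    have hj1 : 1 ≤ j := by omega
    rw [hμ j hj1, hd j hj1]
    unfold spalt
    have eρ : ρ j = π j := by rw [hρ j hj1, if_neg (by omega)]
    by_cases h1 : memI ε n π j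
    · rw [if_pos ((heq j).1 h1), if_pos h1, eρ]
    · rw [if_neg (fun h => h1 ((heq j).2 h)), if_neg h1]
      by_cases h2 : memI ε n π (j - 1)
      · rw [if_pos ((heq (j - 1)).1 h2), if_pos h2, eρ]
      · rw [if_neg (fun h => h2 ((heq (j - 1)).2 h)), if_neg h2]; exact eρ
end
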